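/- arXiv:0908.4122 — 5 statements merged into one kernel-verified Lean document; each statement's English description precedes it below -/
import Mathlib

section
/- Let μ², λ, λ₁, λ₂, κ, v be real parameters with v > 0, κv² − 2μ² > 0, 10λ₁ + λ₂ ≠ 0, and (40μ² − 10κv²)/(10λ₁ + λ₂) ≥ 0. Set m := √(κv² − 2μ²) and let A ∈ ℝ satisfy A² = (40μ² − 10κv²)/(10λ₁ + λ₂). If the parameters satisfy the condition (4μ² − 2κv² + λv²)(20λ₁ + 2λ₂) − 5κ(4μ² − κv²) = 0, then the functions φ(y) = v·tanh(my) and χ(y) = A·sech(my) satisfy, for all y ∈ ℝ, the coupled system of ordinary differential equations φ''(y) = (κ/4)χ(y)²φ(y) + λφ(y)(φ(y)² − v²) and χ''(y) = (−2μ² + κφ(y)²)χ(y) + (λ₁ + λ₂/10)χ(y)³, together with the boundary behaviour φ(y) → ±v and χ(y) → 0 as y → ±∞. -/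
/-!
With `t = tanh` and `s = sech` one has `t' = s²`, `s' = -t s` and `t² + s² = 1`, so
`(v t(my))'' = -2 m² v t s²` and `(A s(my))'' = m² A (s - 2 s³)`. Both sides of each field
equation then become polynomials in `t` and `s`; matching coefficients needs exactly
`m² = κv² - 2μ²`, `(λ₁ + λ₂/10) A² = 4μ² - κv²` and `κA²/4 - λv² = -2m²`, and the last one is
the stated condition on the couplings once `A²` is substituted. The boundary values come from
`tanh → ±1` and `cosh → ∞`.
-/

open Filter Topology

namespace Real

theorem tanh_sq_add_inv_cosh_sq (x : ℝ) : tanh x ^ 2 + (cosh x)⁻¹ ^ 2 = 1 := by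
  rw [tanh_eq_sinh_div_cosh]
  field_simp
  linear_combination (-1) * cosh_sq_sub_sinh_sq x

theorem hasDerivAt_tanh (x : ℝ) : HasDerivAt tanh ((cosh x)⁻¹ ^ 2) x := by
  rw [funext tanh_eq_sinh_div_cosh]
  refine ((hasDerivAt_sinh x).div (hasDerivAt_cosh x) (cosh_pos x).ne').congr_deriv ?_
  field_simp
  linear_combination cosh_sq_sub_sinh_sq x

theorem hasDerivAt_inv_cosh (x : ℝ) :
    HasDerivAt (fun x => (cosh x)⁻¹) (-(tanh x * (cosh x)⁻¹)) x := by
  refine ((hasDerivAt_cosh x).inv (cosh_pos x).ne').congr_deriv ?_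
  rw [tanh_eq_sinh_div_cosh]
  field_simp

theorem deriv_tanh : deriv tanh = fun x => (cosh x)⁻¹ ^ 2 :=
  funext fun x => (hasDerivAt_tanh x).deriv

theorem deriv_inv_cosh : deriv (fun x => (cosh x)⁻¹) = fun x => -(tanh x * (cosh x)⁻¹) :=
  funext fun x => (hasDerivAt_inv_cosh x).deriv

theorem deriv_deriv_tanh (x : ℝ) : deriv (deriv tanh) x = -2 * tanh x * (cosh x)⁻¹ ^ 2 := by
  rw [deriv_tanh, ((hasDerivAt_inv_cosh x).fun_pow 2).deriv]
  ring

theorem deriv_deriv_inv_cosh (x : ℝ) :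
    deriv (deriv fun x => (cosh x)⁻¹) x = (cosh x)⁻¹ - 2 * (cosh x)⁻¹ ^ 3 := by
  rw [deriv_inv_cosh, ((hasDerivAt_tanh x).fun_mul (hasDerivAt_inv_cosh x)).fun_neg.deriv]
  linear_combination (cosh x)⁻¹ * tanh_sq_add_inv_cosh_sq x

theorem tendsto_cosh_atTop : Tendsto cosh atTop atTop := by
  refine tendsto_atTop_mono (fun x => ?_) (tendsto_exp_atTop.atTop_div_const two_pos)
  rw [cosh_eq]
  linarith [exp_pos (-x)]

theorem tendsto_cosh_atBot : Tendsto cosh atBot atTop := by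
  simpa [Function.comp_def] using tendsto_cosh_atTop.comp tendsto_neg_atBot_atTop

theorem tendsto_tanh_atTop : Tendsto tanh atTop (𝓝 1) := by
  have h : ∀ x, tanh x = 1 - exp (-x) / cosh x := fun x => by
    rw [← cosh_sub_sinh, tanh_eq_sinh_div_cosh]
    field_simp
    ring
  simpa [funext h] using
    tendsto_const_nhds.sub (tendsto_exp_neg_atTop_nhds_zero.div_atTop tendsto_cosh_atTop)

theorem tendsto_tanh_atBot : Tendsto tanh atBot (𝓝 (-1)) := by
  simpa [Function.comp_def] using (tendsto_tanh_atTop.comp tendsto_neg_atBot_atTop).neg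

end Real

theorem deriv_deriv_const_mul_comp_mul_left (f : ℝ → ℝ) (c m y : ℝ) :
    deriv (deriv fun y => c * f (m * y)) y = c * m ^ 2 * deriv (deriv f) (m * y) := by
  simp only [deriv_const_mul_field', deriv_comp_mul_left, smul_eq_mul]
  ring

open Real

theorem domain_wall_couplings {μ2 lam l1 l2 κ v m A : ℝ} (hden : 10 * l1 + l2 ≠ 0)
    (hm : m ^ 2 = κ * v ^ 2 - 2 * μ2)
    (hA : A ^ 2 = (40 * μ2 - 10 * κ * v ^ 2) / (10 * l1 + l2))
    (hcond : (4 * μ2 - 2 * κ * v ^ 2 + lam * v ^ 2) * (20 * l1 + 2 * l2)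
      - 5 * κ * (4 * μ2 - κ * v ^ 2) = 0) :
    κ / 4 * A ^ 2 - lam * v ^ 2 = -2 * m ^ 2 ∧ (l1 + l2 / 10) * A ^ 2 = 4 * μ2 - κ * v ^ 2 := by
  have hA' : A ^ 2 * (10 * l1 + l2) = 40 * μ2 - 10 * κ * v ^ 2 := by
    rw [hA, div_mul_cancel₀ _ hden]
  refine ⟨mul_right_cancel₀ hden ?_, by linear_combination hA' / 10⟩
  linear_combination κ / 4 * hA' - hcond / 2 + 2 * (10 * l1 + l2) * hm

theorem quartic_domain_wall_solution_general
    (μ2 lam l1 l2 κ v : ℝ)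
    (hmass : 0 < κ * v ^ 2 - 2 * μ2)
    (hden : 10 * l1 + l2 ≠ 0)
    (m A : ℝ)
    (hm : m = Real.sqrt (κ * v ^ 2 - 2 * μ2))
    (hA : A ^ 2 = (40 * μ2 - 10 * κ * v ^ 2) / (10 * l1 + l2))
    (hcond : (4 * μ2 - 2 * κ * v ^ 2 + lam * v ^ 2) * (20 * l1 + 2 * l2)
      - 5 * κ * (4 * μ2 - κ * v ^ 2) = 0)
    (φ χ : ℝ → ℝ)
    (hφ : ∀ y, φ y = v * Real.tanh (m * y))
    (hχ : ∀ y, χ y = A / Real.cosh (m * y)) :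
    (∀ y : ℝ,
      deriv (deriv φ) y = (κ / 4) * (χ y) ^ 2 * φ y + lam * φ y * ((φ y) ^ 2 - v ^ 2) ∧
      deriv (deriv χ) y = (-2 * μ2 + κ * (φ y) ^ 2) * χ y + (l1 + l2 / 10) * (χ y) ^ 3) ∧
    Filter.Tendsto φ Filter.atTop (nhds v) ∧
    Filter.Tendsto φ Filter.atBot (nhds (-v)) ∧
    Filter.Tendsto χ Filter.atTop (nhds 0) ∧
    Filter.Tendsto χ Filter.atBot (nhds 0) := by
  obtain rfl : φ = fun y => v * tanh (m * y) := funext hφ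
  obtain rfl : χ = fun y => A * (cosh (m * y))⁻¹ :=
    funext fun y => (hχ y).trans (div_eq_mul_inv _ _)
  have hm2 : m ^ 2 = κ * v ^ 2 - 2 * μ2 := hm ▸ sq_sqrt hmass.le
  have hm0 : 0 < m := hm ▸ sqrt_pos.mpr hmass
  obtain ⟨hkink, hsech⟩ := domain_wall_couplings hden hm2 hA hcond
  have hTop : Tendsto (m * ·) atTop atTop := tendsto_id.const_mul_atTop hm0
  have hBot : Tendsto (m * ·) atBot atBot := tendsto_id.const_mul_atBot hm0
  refine ⟨fun y => ⟨?_, ?_⟩, ?_, ?_, ?_, ?_⟩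
  · rw [deriv_deriv_const_mul_comp_mul_left, deriv_deriv_tanh]
    linear_combination -v * tanh (m * y) * (cosh (m * y))⁻¹ ^ 2 * hkink
      - lam * v ^ 3 * tanh (m * y) * tanh_sq_add_inv_cosh_sq (m * y)
  · rw [deriv_deriv_const_mul_comp_mul_left (fun x => (cosh x)⁻¹), deriv_deriv_inv_cosh]
    linear_combination A * ((cosh (m * y))⁻¹ - 2 * (cosh (m * y))⁻¹ ^ 3) * hm2
      - A * (cosh (m * y))⁻¹ ^ 3 * hsech
      - κ * v ^ 2 * A * (cosh (m * y))⁻¹ * tanh_sq_add_inv_cosh_sq (m * y)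
  · simpa using (tendsto_tanh_atTop.comp hTop).const_mul v
  · simpa using (tendsto_tanh_atBot.comp hBot).const_mul v
  · simpa using (tendsto_cosh_atTop.comp hTop).inv_tendsto_atTop.const_mul A
  · simpa using (tendsto_cosh_atBot.comp hBot).inv_tendsto_atTop.const_mul A

/-- The quartic-potential domain-wall background of the SO(10) → SU(5)×U(1)_X model:
`φ(y) = v·tanh(my)`, `χ(y) = A·sech(my)` solve the static Euler–Lagrange equations
and have the required boundary behaviour. -/
theorem quartic_domain_wall_solution
    (μ2 lam l1 l2 κ v : ℝ)
    (hv : 0 < v)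
    (hmass : 0 < κ * v ^ 2 - 2 * μ2)
    (hden : 10 * l1 + l2 ≠ 0)
    (hA2nonneg : (40 * μ2 - 10 * κ * v ^ 2) / (10 * l1 + l2) ≥ 0)
    (m A : ℝ)
    (hm : m = Real.sqrt (κ * v ^ 2 - 2 * μ2))
    (hA : A ^ 2 = (40 * μ2 - 10 * κ * v ^ 2) / (10 * l1 + l2))
    (hcond : (4 * μ2 - 2 * κ * v ^ 2 + lam * v ^ 2) * (20 * l1 + 2 * l2)
      - 5 * κ * (4 * μ2 - κ * v ^ 2) = 0)
    (φ χ : ℝ → ℝ)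
    (hφ : ∀ y, φ y = v * Real.tanh (m * y))
    (hχ : ∀ y, χ y = A / Real.cosh (m * y)) :
    (∀ y : ℝ,
      deriv (deriv φ) y = (κ / 4) * (χ y) ^ 2 * φ y + lam * φ y * ((φ y) ^ 2 - v ^ 2) ∧
      deriv (deriv χ) y = (-2 * μ2 + κ * (φ y) ^ 2) * χ y + (l1 + l2 / 10) * (χ y) ^ 3) ∧
    Filter.Tendsto φ Filter.atTop (nhds v) ∧
    Filter.Tendsto φ Filter.atBot (nhds (-v)) ∧
    Filter.Tendsto χ Filter.atTop (nhds 0) ∧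
    Filter.Tendsto χ Filter.atBot (nhds 0) :=
  quartic_domain_wall_solution_general μ2 lam l1 l2 κ v hmass hden m A hm hA hcond φ χ hφ hχ
end

section
/- Let U ∈ ℝ with U > 2 and set s := (√(4U+1) − 1)/2 and λ* := s² = (1/4)(√(4U+1) − 1)². Then λ* > 1, the function f(z) = (sech z)^s is a nontrivial bounded solution on ℝ of f''(z) + (−λ* + U·sech²z)·f(z) = 0, and consequently there exists ω > 0 (namely ω² = λ* − 1) such that the equation −f''(z) − U·sech²(z)·f(z) = (−ω² − 1)·f(z) admits a nontrivial bounded solution. -/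
/-!
With `c = cosh z`, differentiating `c ^ p` twice and using `sinh² = c² − 1` gives
`(c ^ p)'' = (p² − p (p − 1) / c²) · c ^ p`. For `p = −s` the potential term is `s (s + 1) sech² z`,
so `sech^s` solves the equation exactly when `U = s² + s`, i.e. when `s` is the positive root
`(√(4U+1) − 1)/2`. This root exceeds `1` once `U > 2`, so `λ* = s² > 1` and `ω = √(λ* − 1)` works
with the same bounded mode `sech^s`.
-/

open Real

namespace Real

theorem one_div_cosh_rpow (s z : ℝ) : (1 / cosh z) ^ s = cosh z ^ (-s) := by
  rw [one_div, inv_rpow (cosh_pos z).le, rpow_neg (cosh_pos z).le]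

theorem hasDerivAt_cosh_rpow (p z : ℝ) :
    HasDerivAt (fun x => cosh x ^ p) (p * sinh z * cosh z ^ (p - 1)) z := by
  convert (hasDerivAt_cosh z).rpow_const (p := p) (Or.inl (cosh_pos z).ne') using 1
  ring

theorem deriv_cosh_rpow (p : ℝ) :
    deriv (fun x => cosh x ^ p) = fun z => p * sinh z * cosh z ^ (p - 1) :=
  funext fun z => (hasDerivAt_cosh_rpow p z).deriv

theorem deriv_deriv_cosh_rpow (p z : ℝ) :
    deriv (deriv fun x => cosh x ^ p) z = (p ^ 2 - p * (p - 1) / cosh z ^ 2) * cosh z ^ p := by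
  have hc : cosh z ≠ 0 := (cosh_pos z).ne'
  have hderiv : HasDerivAt (fun x => p * sinh x * cosh x ^ (p - 1))
      (p * cosh z * cosh z ^ (p - 1) + p * sinh z * ((p - 1) * sinh z * cosh z ^ (p - 1 - 1))) z :=
    ((hasDerivAt_sinh z).const_mul p).mul (hasDerivAt_cosh_rpow (p - 1) z)
  rw [deriv_cosh_rpow, hderiv.deriv]
  have hpow₁ : cosh z ^ (p - 1) = cosh z ^ p / cosh z := rpow_sub_one hc p
  have hpow₂ : cosh z ^ (p - 1 - 1) = cosh z ^ p / cosh z ^ 2 := by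
    rw [rpow_sub_one hc, rpow_sub_one hc]; ring
  rw [hpow₁, hpow₂]
  field_simp
  linear_combination p * (p - 1) * sinh_sq z

theorem abs_cosh_rpow_le_one {p : ℝ} (hp : p ≤ 0) (z : ℝ) : |cosh z ^ p| ≤ 1 := by
  rw [abs_of_nonneg (rpow_nonneg (cosh_pos z).le p)]
  exact rpow_le_one_of_one_le_of_nonpos (one_le_cosh z) hp

theorem cosh_rpow_ne_zero (p z : ℝ) : cosh z ^ p ≠ 0 :=
  (rpow_pos_of_pos (cosh_pos z) p).ne'

end Real

theorem cosh_rpow_neg_solves_poschlTeller (s z : ℝ) :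
    deriv (deriv fun x => cosh x ^ (-s)) z + (-s ^ 2 + (s ^ 2 + s) * (1 / cosh z) ^ 2) * cosh z ^ (-s)
      = 0 := by
  rw [deriv_deriv_cosh_rpow]
  ring

theorem sq_add_self_eq_of_eq_sqrt {U s : ℝ} (hU : -(1 / 4) ≤ U)
    (hs : s = (√(4 * U + 1) - 1) / 2) : s ^ 2 + s = U := by
  have hsq : √(4 * U + 1) ^ 2 = 4 * U + 1 := sq_sqrt (by linarith)
  rw [hs]
  linear_combination hsq / 4

theorem one_lt_of_eq_sqrt {U s : ℝ} (hU : 2 < U) (hs : s = (√(4 * U + 1) - 1) / 2) : 1 < s := by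
  have h3 : 3 < √(4 * U + 1) := by
    rw [show (3 : ℝ) = √(3 ^ 2) by rw [sqrt_sq (by norm_num)]]
    exact sqrt_lt_sqrt (by norm_num) (by linarith)
  rw [hs]
  linarith

/-- For `U > 2`, with `s = (√(4U+1) − 1)/2` and `λ* = s²`, the function
`f(z) = (sech z)^s` is a nontrivial bounded solution of
`f'' + (−λ* + U·sech²z)·f = 0` with `λ* > 1`, giving an unstable mode `ω² = λ* − 1 > 0`
of the linearized perturbation equation. -/
theorem quartic_model_unstable_mode
    (U : ℝ) (hU : 2 < U)
    (s lamStar : ℝ)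
    (hs : s = (Real.sqrt (4 * U + 1) - 1) / 2)
    (hlamStar : lamStar = s ^ 2)
    (f : ℝ → ℝ)
    (hf : ∀ z : ℝ, f z = (1 / Real.cosh z) ^ s) :
    lamStar = (1 / 4) * (Real.sqrt (4 * U + 1) - 1) ^ 2 ∧
    1 < lamStar ∧
    (∃ C : ℝ, ∀ z : ℝ, |f z| ≤ C) ∧
    (∃ z : ℝ, f z ≠ 0) ∧
    (∀ z : ℝ, deriv (deriv f) z + (-lamStar + U * (1 / Real.cosh z) ^ 2) * f z = 0) ∧
    (∃ ω : ℝ, 0 < ω ∧ ω ^ 2 = lamStar - 1 ∧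
      ∃ g : ℝ → ℝ,
        (∀ z : ℝ, -(deriv (deriv g) z) - U * (1 / Real.cosh z) ^ 2 * g z
          = (-(ω ^ 2) - 1) * g z) ∧
        (∃ C : ℝ, ∀ z : ℝ, |g z| ≤ C) ∧
        (∃ z : ℝ, g z ≠ 0)) := by
  have hs₁ : 1 < s := one_lt_of_eq_sqrt hU hs
  have hU_eq : s ^ 2 + s = U := sq_add_self_eq_of_eq_sqrt (by linarith) hs
  have hlam₁ : 1 < lamStar := by rw [hlamStar]; nlinarith
  obtain rfl : f = fun x => cosh x ^ (-s) := funext fun z => (hf z).trans (one_div_cosh_rpow s z)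
  have hbounded : ∃ C : ℝ, ∀ z : ℝ, |cosh z ^ (-s)| ≤ C := ⟨1, abs_cosh_rpow_le_one (by linarith)⟩
  have hnonzero : ∃ z : ℝ, cosh z ^ (-s) ≠ 0 := ⟨0, cosh_rpow_ne_zero _ 0⟩
  have hode (z : ℝ) :
      deriv (deriv fun x => cosh x ^ (-s)) z + (-lamStar + U * (1 / cosh z) ^ 2) * cosh z ^ (-s)
        = 0 := by
    rw [hlamStar, ← hU_eq]
    exact cosh_rpow_neg_solves_poschlTeller s z
  have hω : √(lamStar - 1) ^ 2 = lamStar - 1 := sq_sqrt (by linarith)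
  refine ⟨by rw [hlamStar, hs]; ring, hlam₁, hbounded, hnonzero, hode,
    √(lamStar - 1), sqrt_pos.mpr (by linarith), hω, _, fun z => ?_, hbounded, hnonzero⟩
  rw [hω]
  linear_combination -hode z
end

section
/- Let M > 0, let p : ℝ → ℝ be twice continuously differentiable, W : ℝ → ℝ continuous, and m_n ∈ ℝ. Define z : ℝ → ℝ by z(y) = ∫₀^y exp(p(u)/12M³) du; since the integrand is positive, z is a diffeomorphism of ℝ onto its image, with inverse y(z). Suppose f : ℝ → ℝ is twice continuously differentiable and satisfies, for all y, 24M⁶ m_n² e^{p(y)/6M³} f(y) = −24M⁶ f''(y) + 10M³ p'(y) f'(y) + [4M³ p''(y) − p'(y)² + 24M⁶ W(y)] f(y). Then the function f̃(z) := e^{−p(y(z))/6M³} f(y(z)) satisfies, for all z in the image of ℝ, −f̃''(z) + e^{−p(y(z))/6M³} W(y(z)) f̃(z) = m_n² f̃(z). -/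
/-!
With `a = p/12M³` the conformal coordinate satisfies `dz/dy = e^a`, so `d/dz = e^{-a} d/dy` and
for `F(Z y) = e^{-2a(y)} f(y)` one gets `F'' = e^{-4a} (f'' - 5a'f' + (6a'² - 2a'')f)`. Divided by
`24M⁶`, the profile equation says that this bracket is `(W - m_n² e^{2a}) f`, whence
`F'' = e^{-2a} W F - m_n² F`.
-/

open Filter Function Real Topology

section LeftInverse

variable {Z Y φ : ℝ → ℝ} (hZ : ∀ x, HasStrictDerivAt Z (φ x) x) (hφ : ∀ x, φ x ≠ 0)
  (hY : LeftInverse Y Z)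
include hZ hφ hY

theorem hasDerivAt_comp_leftInverse {h : ℝ → ℝ} {x : ℝ} (hh : DifferentiableAt ℝ h x) :
    HasDerivAt (h ∘ Y) (deriv h x / φ x) (Z x) := by
  have hYx : HasDerivAt Y (φ x)⁻¹ (Z x) :=
    ((hZ x).to_local_left_inverse (hφ x) (Eventually.of_forall hY)).hasDerivAt
  have hhx : HasDerivAt h (deriv h x) (Y (Z x)) := by rw [hY x]; exact hh.hasDerivAt
  rw [div_eq_mul_inv]
  exact hhx.comp (Z x) hYx

theorem deriv_comp_leftInverse_eventuallyEq {h : ℝ → ℝ} (hh : Differentiable ℝ h) (x : ℝ) :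
    deriv (h ∘ Y) =ᶠ[𝓝 (Z x)] (fun t => deriv h t / φ t) ∘ Y := by
  have hrange : Set.range Z ∈ 𝓝 (Z x) := by
    rw [← (hZ x).map_nhds_eq (hφ x)]
    exact mem_map.mpr (univ_mem' fun t => Set.mem_range_self t)
  filter_upwards [hrange] with z ⟨t, hzt⟩
  subst hzt
  simpa only [comp_apply, hY t] using (hasDerivAt_comp_leftInverse hZ hφ hY (hh t)).deriv

theorem deriv_deriv_comp_leftInverse {h : ℝ → ℝ} (hh : Differentiable ℝ h) {x : ℝ}
    (hh' : DifferentiableAt ℝ (fun t => deriv h t / φ t) x) :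
    deriv (deriv (h ∘ Y)) (Z x) = deriv (fun t => deriv h t / φ t) x / φ x := by
  rw [(deriv_comp_leftInverse_eventuallyEq hZ hφ hY hh x).deriv_eq]
  exact (hasDerivAt_comp_leftInverse hZ hφ hY hh').deriv

end LeftInverse

theorem deriv_deriv_exp_mul_comp_leftInverse {a f Z Y : ℝ → ℝ} (ha : ContDiff ℝ 2 a)
    (hf : ContDiff ℝ 2 f) (hZ : ∀ x, HasStrictDerivAt Z (exp (a x)) x) (hY : LeftInverse Y Z)
    (x : ℝ) :
    deriv (deriv ((fun t => exp (-2 * a t) * f t) ∘ Y)) (Z x)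
      = exp (-4 * a x) * (deriv (deriv f) x - 5 * deriv a x * deriv f x
          + (6 * deriv a x ^ 2 - 2 * deriv (deriv a) x) * f x) := by
  have ha1 : ∀ t, HasDerivAt a (deriv a t) t :=
    fun t => (ha.differentiable two_ne_zero t).hasDerivAt
  have hf1 : ∀ t, HasDerivAt f (deriv f t) t :=
    fun t => (hf.differentiable two_ne_zero t).hasDerivAt
  have ha2 : HasDerivAt (deriv a) (deriv (deriv a) x) x :=
    (ha.differentiable_deriv_two x).hasDerivAt
  have hf2 : HasDerivAt (deriv f) (deriv (deriv f) x) x :=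
    (hf.differentiable_deriv_two x).hasDerivAt
  have hfirst : ∀ t, HasDerivAt (fun t => exp (-2 * a t) * f t)
      (exp (-2 * a t) * (deriv f t - 2 * deriv a t * f t)) t := fun t => by
    exact ((((ha1 t).const_mul (-2)).exp).mul (hf1 t)).congr_deriv (by ring)
  have hquot : (fun t => deriv (fun t => exp (-2 * a t) * f t) t / exp (a t))
      = fun t => exp (-3 * a t) * (deriv f t - 2 * deriv a t * f t) := by
    funext t
    rw [(hfirst t).deriv, mul_div_right_comm, ← exp_sub]
    congr 2; ring
  have hsecond : HasDerivAt (fun t => exp (-3 * a t) * (deriv f t - 2 * deriv a t * f t))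
      (exp (-3 * a x) * (deriv (deriv f) x - 5 * deriv a x * deriv f x
          + (6 * deriv a x ^ 2 - 2 * deriv (deriv a) x) * f x)) x := by
    exact ((((ha1 x).const_mul (-3)).exp).mul
      (hf2.sub ((ha2.const_mul 2).mul (hf1 x)))).congr_deriv
        (by simp only [Pi.sub_apply, Pi.mul_apply]; ring)
  rw [deriv_deriv_comp_leftInverse hZ (fun t => exp_ne_zero _) hY
      (fun t => (hfirst t).differentiableAt) (hquot ▸ hsecond.differentiableAt),
    hquot, hsecond.deriv, mul_div_right_comm, ← exp_sub]
  congr 2; ring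

theorem conformal_coordinates_schrodinger_form_general
    (M : ℝ) (hM : 0 < M)
    (p W : ℝ → ℝ) (hp : ContDiff ℝ 2 p)
    (mn : ℝ)
    (f : ℝ → ℝ) (hf : ContDiff ℝ 2 f)
    (Z Y : ℝ → ℝ)
    (hZ : ∀ y : ℝ, Z y = ∫ u in (0:ℝ)..y, Real.exp (p u / (12 * M ^ 3)))
    (hY : ∀ y : ℝ, Y (Z y) = y)
    (heq : ∀ y : ℝ,
      24 * M ^ 6 * mn ^ 2 * Real.exp (p y / (6 * M ^ 3)) * f y
        = -24 * M ^ 6 * deriv (deriv f) y + 10 * M ^ 3 * deriv p y * deriv f y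
          + (4 * M ^ 3 * deriv (deriv p) y - (deriv p y) ^ 2 + 24 * M ^ 6 * W y) * f y)
    (F : ℝ → ℝ)
    (hF : ∀ z : ℝ, F z = Real.exp (-(p (Y z)) / (6 * M ^ 3)) * f (Y z)) :
    ∀ y : ℝ,
      -(deriv (deriv F) (Z y)) + Real.exp (-(p y) / (6 * M ^ 3)) * W y * F (Z y)
        = mn ^ 2 * F (Z y) := by
  intro y
  set a : ℝ → ℝ := fun t => p t / (12 * M ^ 3) with ha_def
  have hZa : ∀ x, HasStrictDerivAt Z (exp (a x)) x := fun x => by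
    rw [funext hZ]
    exact (continuous_exp.comp (hp.continuous.div_const _)).integral_hasStrictDerivAt 0 x
  have hFa : F = (fun t => exp (-2 * a t) * f t) ∘ Y := funext fun z => by
    rw [hF, comp_apply, ha_def]; ring_nf
  have hda : deriv a = fun t => deriv p t / (12 * M ^ 3) := funext fun t => deriv_div_const _
  rw [hFa, deriv_deriv_exp_mul_comp_leftInverse (hp.div_const _) hf hZa hY, hda]
  simp only [comp_apply, hY, ha_def, deriv_div_const]
  set G := exp (-2 * (p y / (12 * M ^ 3)))
  have hG2 : exp (-4 * (p y / (12 * M ^ 3))) = G ^ 2 := by rw [sq, ← exp_add]; ring_nf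
  have hG : exp (-p y / (6 * M ^ 3)) = G := by congr 1; ring
  have hGinv : exp (p y / (6 * M ^ 3)) * G = 1 := by rw [← exp_add, ← exp_zero]; ring_nf
  rw [hG2, hG]
  linear_combination (norm := skip) (-G ^ 2 / (24 * M ^ 6)) * heq y + mn ^ 2 * G * f y * hGinv
  field_simp
  ring

/-- Change to conformal coordinates: the warped-space Kaluza–Klein profile equation
becomes a 1-dimensional time-independent Schrödinger equation for
`f̃(z) = e^{−p(y(z))/6M³} f(y(z))` with potential `e^{−p/6M³}W`. -/
theorem conformal_coordinates_schrodinger_form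
    (M : ℝ) (hM : 0 < M)
    (p W : ℝ → ℝ) (hp : ContDiff ℝ 2 p) (hW : Continuous W)
    (mn : ℝ)
    (f : ℝ → ℝ) (hf : ContDiff ℝ 2 f)
    (Z Y : ℝ → ℝ)
    (hZ : ∀ y : ℝ, Z y = ∫ u in (0:ℝ)..y, Real.exp (p u / (12 * M ^ 3)))
    (hY : ∀ y : ℝ, Y (Z y) = y)
    (heq : ∀ y : ℝ,
      24 * M ^ 6 * mn ^ 2 * Real.exp (p y / (6 * M ^ 3)) * f y
        = -24 * M ^ 6 * deriv (deriv f) y + 10 * M ^ 3 * deriv p y * deriv f y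
          + (4 * M ^ 3 * deriv (deriv p) y - (deriv p y) ^ 2 + 24 * M ^ 6 * W y) * f y)
    (F : ℝ → ℝ)
    (hF : ∀ z : ℝ, F z = Real.exp (-(p (Y z)) / (6 * M ^ 3)) * f (Y z)) :
    ∀ y : ℝ,
      -(deriv (deriv F) (Z y)) + Real.exp (-(p y) / (6 * M ^ 3)) * W y * F (Z y)
        = mn ^ 2 * F (Z y) :=
  conformal_coordinates_schrodinger_form_general M hM p W hp mn f hf Z Y hZ hY heq F hF
end

section
/- Let m > 0 and α, β ∈ ℝ, and define f : ℝ → ℝ by f(y) = exp(−∫₀^y [α·sech(mt) + β·tanh(mt)] dt). Then f is square integrable on ℝ if and only if β > 0. -/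
/-!
An antiderivative of `α sech (m t) + β tanh (m t)` is `(α / m) gd (m y) + (β / m) log cosh (m y)`,
where the Gudermannian `gd = arctan ∘ sinh` takes values in `(-π/2, π/2)`, and
`|x| - log 2 ≤ log cosh x`. So if `β ≤ 0` the profile `f` is bounded below by a positive
constant, while if `β > 0` it is bounded by a multiple of `exp (-β |y|)`. Since `f ^ 2` is the
profile with parameters `(2α, 2β)`, square integrability of `f` reduces to integrability of the
profile itself.
-/

open MeasureTheory Set Real

namespace Real

lemma hasDerivAt_arctan_sinh (x : ℝ) : HasDerivAt (fun x => arctan (sinh x)) (1 / cosh x) x := by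
  convert (hasDerivAt_sinh x).arctan using 1
  rw [← cosh_sq', sq]
  field_simp [(cosh_pos x).ne']

lemma hasDerivAt_log_cosh (x : ℝ) : HasDerivAt (fun x => log (cosh x)) (tanh x) x := by
  convert (hasDerivAt_cosh x).log (cosh_pos x).ne' using 1
  rw [tanh_eq_sinh_div_cosh]

lemma abs_sub_log_two_le_log_cosh (x : ℝ) : |x| - log 2 ≤ log (cosh x) := by
  rw [sub_le_iff_le_add, ← log_mul (cosh_pos x).ne' two_ne_zero, le_log_iff_exp_le (by positivity),
    cosh_eq]
  linarith [exp_abs_le x]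

lemma abs_arctan_le (x : ℝ) : |arctan x| ≤ π / 2 :=
  abs_le.2 ⟨(neg_pi_div_two_lt_arctan x).le, (arctan_lt_pi_div_two x).le⟩

end Real

lemma integrable_exp_neg_mul_abs {b : ℝ} (hb : 0 < b) : Integrable fun x : ℝ => exp (-b * |x|) := by
  rw [← integrableOn_univ, ← Iic_union_Ioi (a := 0)]
  refine IntegrableOn.union ?_ ?_
  · refine (integrableOn_exp_mul_Iic hb 0).congr_fun (fun x hx => ?_) measurableSet_Iic
    rw [abs_of_nonpos hx, neg_mul_neg]
  · refine (integrableOn_exp_mul_Ioi (neg_lt_zero.2 hb) 0).congr_fun (fun x hx => ?_) measurableSet_Ioi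
    rw [abs_of_pos hx]

lemma integrable_exp_neg_of_mul_abs_sub_le {g : ℝ → ℝ} (hg : AEStronglyMeasurable g) {b C : ℝ}
    (hb : 0 < b) (h : ∀ x, b * |x| - C ≤ g x) : Integrable fun x => exp (-g x) := by
  refine ((integrable_exp_neg_mul_abs hb).const_mul (exp C)).mono'
    (continuous_exp.comp_aestronglyMeasurable hg.neg) (ae_of_all _ fun x => ?_)
  rw [norm_of_nonneg (exp_nonneg _), ← exp_add, exp_le_exp]
  linarith [h x]

lemma not_integrable_exp_neg_of_le {X : Type*} [MeasurableSpace X] {μ : Measure X}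
    (hμ : μ univ = ⊤) {g : X → ℝ} {K : ℝ} (h : ∀ x, g x ≤ K) :
    ¬ Integrable (fun x => exp (-g x)) μ := by
  intro hint
  have hconst : Integrable (fun _ => exp (-K)) μ :=
    hint.mono' aestronglyMeasurable_const
      (ae_of_all _ fun x => by simpa [abs_of_pos (exp_pos _)] using h x)
  rw [integrable_const_iff_isFiniteMeasure (exp_pos _).ne'] at hconst
  exact measure_ne_top μ univ hμ

noncomputable def zeroModeExponent (m α β y : ℝ) : ℝ :=
  α / m * arctan (sinh (m * y)) + β / m * log (cosh (m * y))

section ZeroMode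

variable {m α β : ℝ}

lemma hasDerivAt_zeroModeExponent (hm : m ≠ 0) (y : ℝ) :
    HasDerivAt (zeroModeExponent m α β)
      (α * (1 / cosh (m * y)) + β * tanh (m * y)) y := by
  have hmy : HasDerivAt (fun y => m * y) m y := by simpa using (hasDerivAt_id y).const_mul m
  refine ((((hasDerivAt_arctan_sinh (m * y)).comp y hmy).const_mul (α / m)).add
    (((hasDerivAt_log_cosh (m * y)).comp y hmy).const_mul (β / m))).congr_deriv ?_
  field_simp

lemma continuous_zeroModeExponent (hm : m ≠ 0) : Continuous (zeroModeExponent m α β) :=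
  continuous_iff_continuousAt.2 fun y => (hasDerivAt_zeroModeExponent hm y).continuousAt

lemma integral_sech_add_tanh (hm : m ≠ 0) (y : ℝ) :
    ∫ t in (0:ℝ)..y, α * (1 / cosh (m * t)) + β * tanh (m * t) = zeroModeExponent m α β y := by
  have hcont : Continuous fun t => α * (1 / cosh (m * t)) + β * tanh (m * t) := by
    simp only [tanh_eq_sinh_div_cosh]
    fun_prop (disch := exact fun t => (cosh_pos _).ne')
  rw [intervalIntegral.integral_eq_sub_of_hasDerivAt (fun t _ => hasDerivAt_zeroModeExponent hm t)
    (hcont.intervalIntegrable 0 y)]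
  simp [zeroModeExponent]

lemma zeroModeExponent_le (hm : 0 < m) (hβ : β ≤ 0) (y : ℝ) :
    zeroModeExponent m α β y ≤ |α| / m * (π / 2) := by
  have harctan : α / m * arctan (sinh (m * y)) ≤ |α| / m * (π / 2) := by
    calc α / m * arctan (sinh (m * y)) ≤ |α / m * arctan (sinh (m * y))| := le_abs_self _
      _ = |α| / m * |arctan (sinh (m * y))| := by rw [abs_mul, abs_div, abs_of_pos hm]
      _ ≤ |α| / m * (π / 2) := by gcongr; exact abs_arctan_le _
  have hlog : β / m * log (cosh (m * y)) ≤ 0 :=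
    mul_nonpos_of_nonpos_of_nonneg (div_nonpos_of_nonpos_of_nonneg hβ hm.le)
      (log_nonneg (one_le_cosh _))
  unfold zeroModeExponent
  linarith

lemma mul_abs_sub_le_zeroModeExponent (hm : 0 < m) (hβ : 0 ≤ β) (y : ℝ) :
    β * |y| - (|α| / m * (π / 2) + β / m * log 2) ≤ zeroModeExponent m α β y := by
  have harctan : -(|α| / m * (π / 2)) ≤ α / m * arctan (sinh (m * y)) := by
    calc -(|α| / m * (π / 2)) ≤ -(|α| / m * |arctan (sinh (m * y))|) := by
          gcongr; exact abs_arctan_le _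
      _ = -|α / m * arctan (sinh (m * y))| := by rw [abs_mul, abs_div, abs_of_pos hm]
      _ ≤ α / m * arctan (sinh (m * y)) := neg_abs_le _
  have hlog : β * |y| - β / m * log 2 ≤ β / m * log (cosh (m * y)) := by
    calc β * |y| - β / m * log 2 = β / m * (|m * y| - log 2) := by
          rw [abs_mul, abs_of_pos hm]; field_simp
      _ ≤ β / m * log (cosh (m * y)) := by gcongr; exact abs_sub_log_two_le_log_cosh _
  unfold zeroModeExponent
  linarith

lemma integrable_exp_neg_zeroModeExponent_iff (hm : 0 < m) :
    Integrable (fun y => exp (-zeroModeExponent m α β y)) ↔ 0 < β := by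
  refine ⟨fun hint => ?_, fun hβ => ?_⟩
  · by_contra! hβ
    exact not_integrable_exp_neg_of_le volume_univ (zeroModeExponent_le hm hβ) hint
  · exact integrable_exp_neg_of_mul_abs_sub_le (continuous_zeroModeExponent hm.ne').aestronglyMeasurable
      hβ (mul_abs_sub_le_zeroModeExponent hm hβ.le)

lemma exp_neg_zeroModeExponent_sq (m α β y : ℝ) :
    exp (-zeroModeExponent m α β y) ^ 2 = exp (-zeroModeExponent m (2 * α) (2 * β) y) := by
  rw [← exp_nat_mul, zeroModeExponent, zeroModeExponent]
  push_cast
  ring_nf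

end ZeroMode

/-- The fermion zero-mode profile
`f(y) = exp(−∫₀^y [α·sech(mt) + β·tanh(mt)] dt)` is square integrable iff `β > 0`. -/
theorem zero_mode_square_integrable_iff
    (m α β : ℝ) (hm : 0 < m)
    (f : ℝ → ℝ)
    (hf : ∀ y : ℝ,
      f y = Real.exp (-(∫ t in (0:ℝ)..y, α * (1 / Real.cosh (m * t)) + β * Real.tanh (m * t)))) :
    MemLp f 2 (volume : Measure ℝ) ↔ 0 < β := by
  have hf' : f = fun y => exp (-zeroModeExponent m α β y) :=
    funext fun y => by rw [hf, integral_sech_add_tanh hm.ne']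
  have hfmeas : AEStronglyMeasurable f :=
    hf' ▸ (continuous_exp.comp (continuous_zeroModeExponent hm.ne').neg).aestronglyMeasurable
  rw [memLp_two_iff_integrable_sq hfmeas, hf']
  simp only [exp_neg_zeroModeExponent_sq]
  rw [integrable_exp_neg_zeroModeExponent_iff hm]
  exact mul_pos_iff_of_pos_left two_pos
end

section
/- Let m > 0, β > 0 and α ∈ ℝ, and define g : ℝ → ℝ by g(y) = α·sech(my) + β·tanh(my). Then g has exactly one zero y₀ ∈ ℝ, and it is given by e^{m y₀} = (−α + √(α² + β²))/β. Moreover, for fixed m and β, the zero y₀ is a strictly decreasing function of α; in particular, two such functions with the same β but different values of α have distinct zeros. -/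
private lemma zero_iff (m β : ℝ) (hβ : 0 < β) (α y : ℝ) :
    α * (1 / Real.cosh (m * y)) + β * Real.tanh (m * y) = 0 ↔
      Real.sinh (m * y) = -α / β := by
  have hc : Real.cosh (m * y) ≠ 0 := (Real.cosh_pos _).ne'
  rw [Real.tanh_eq_sinh_div_cosh,
    show α * (1 / Real.cosh (m * y)) + β * (Real.sinh (m * y) / Real.cosh (m * y)) =
      (α + β * Real.sinh (m * y)) / Real.cosh (m * y) from by field_simp,
    div_eq_zero_iff]
  simp only [hc, or_false]
  rw [eq_div_iff hβ.ne']
  constructor <;> intro h <;> linear_combination h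

/-- `g(y) = α·sech(my) + β·tanh(my)` (with `m, β > 0`) has a unique zero `y₀`,
given by `e^{m y₀} = (−α + √(α² + β²))/β`; the zero is strictly decreasing in `α`,
so different values of `α` give distinct localization points. -/
theorem fermion_localization_point
    (m β : ℝ) (hm : 0 < m) (hβ : 0 < β) :
    (∀ α : ℝ,
      (∃! y₀ : ℝ, α * (1 / Real.cosh (m * y₀)) + β * Real.tanh (m * y₀) = 0) ∧
      (∀ y₀ : ℝ, α * (1 / Real.cosh (m * y₀)) + β * Real.tanh (m * y₀) = 0 →
        Real.exp (m * y₀) = (-α + Real.sqrt (α ^ 2 + β ^ 2)) / β)) ∧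
    (∀ α₁ α₂ y₁ y₂ : ℝ, α₁ < α₂ →
      α₁ * (1 / Real.cosh (m * y₁)) + β * Real.tanh (m * y₁) = 0 →
      α₂ * (1 / Real.cosh (m * y₂)) + β * Real.tanh (m * y₂) = 0 →
      y₂ < y₁) ∧
    (∀ α₁ α₂ y₁ y₂ : ℝ, α₁ ≠ α₂ →
      α₁ * (1 / Real.cosh (m * y₁)) + β * Real.tanh (m * y₁) = 0 →
      α₂ * (1 / Real.cosh (m * y₂)) + β * Real.tanh (m * y₂) = 0 →
      y₁ ≠ y₂) := by
  have mono : ∀ α₁ α₂ y₁ y₂ : ℝ, α₁ < α₂ →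
      α₁ * (1 / Real.cosh (m * y₁)) + β * Real.tanh (m * y₁) = 0 →
      α₂ * (1 / Real.cosh (m * y₂)) + β * Real.tanh (m * y₂) = 0 →
      y₂ < y₁ := by
    intro α₁ α₂ y₁ y₂ hlt h1 h2
    rw [zero_iff m β hβ] at h1 h2
    have hs : Real.sinh (m * y₂) < Real.sinh (m * y₁) := by
      rw [h1, h2]
      have hlt' : -α₂ < -α₁ := by linarith
      gcongr
    have : m * y₂ < m * y₁ := Real.sinh_lt_sinh.mp hs
    exact lt_of_mul_lt_mul_left this hm.le
  refine ⟨?_, mono, ?_⟩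
  · intro α
    constructor
    · refine ⟨Real.arsinh (-α / β) / m, ?_, ?_⟩
      · show α * (1 / Real.cosh (m * (Real.arsinh (-α / β) / m))) +
            β * Real.tanh (m * (Real.arsinh (-α / β) / m)) = 0
        rw [zero_iff m β hβ]
        rw [mul_div_cancel₀ _ hm.ne', Real.sinh_arsinh]
      · intro y hy
        rw [zero_iff m β hβ] at hy
        have : m * y = Real.arsinh (-α / β) := by
          rw [← hy, Real.arsinh_sinh]
        rw [eq_div_iff hm.ne']
        linarith [this]
    · intro y hy
      rw [zero_iff m β hβ] at hy
      have hc : Real.cosh (m * y) = Real.sqrt (α ^ 2 + β ^ 2) / β := by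
        have h1 : Real.cosh (m * y) ^ 2 = (α ^ 2 + β ^ 2) / β ^ 2 := by
          have := Real.cosh_sq (m * y)
          rw [this, hy]
          field_simp
        have h2 : Real.cosh (m * y) = Real.sqrt ((α ^ 2 + β ^ 2) / β ^ 2) := by
          rw [← h1, Real.sqrt_sq (Real.cosh_pos _).le]
        rw [h2, Real.sqrt_div (by positivity : (0:ℝ) ≤ α ^ 2 + β ^ 2),
          Real.sqrt_sq hβ.le]
      rw [← Real.cosh_add_sinh, hy, hc]
      ring
  · intro α₁ α₂ y₁ y₂ hne h1 h2
    rcases hne.lt_or_gt with h | h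
    · exact fun he => absurd (mono _ _ _ _ h h1 h2) (by simp [he])
    · exact fun he => absurd (mono _ _ _ _ h h2 h1) (by simp [he])
end
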